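/- Let 1 ≤ k ≤ n−1 and let A be an n×n matrix of rational functions, each bounded at infinity, which is reduced of order k−1 and satisfies A_{k,k+1}(∞) ≠ 0. Then there exists an n×n matrix B of rational functions, each bounded at infinity, such that B is of the same kind as A and B is reduced of order k; moreover, there exists an invertible constant matrix S (namely S = T(∞) for the transforming matrix T) such that B(∞) = S^{−1} A(∞) S, so A(∞) and B(∞) are similar and hence have the same eigenvalues including algebraic and geometric multiplicities. -/

import Mathlib

open Filter

/-- Evaluation of a rational function at a point of `ℂ`. -/
noncomputable def evalRat (f : RatFunc ℂ) (z : ℂ) : ℂ := f.eval (RingHom.id ℂ) z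

/-- A rational function is bounded at infinity iff the degree of its numerator
does not exceed the degree of its denominator. -/
def BddAtInf (f : RatFunc ℂ) : Prop := f.num.degree ≤ f.denom.degree

/-- The derivative of a rational function, as a rational function. -/
noncomputable def ratDeriv (f : RatFunc ℂ) : RatFunc ℂ :=
  (algebraMap (Polynomial ℂ) (RatFunc ℂ) (Polynomial.derivative f.num) *
      algebraMap (Polynomial ℂ) (RatFunc ℂ) f.denom -
    algebraMap (Polynomial ℂ) (RatFunc ℂ) f.num *
      algebraMap (Polynomial ℂ) (RatFunc ℂ) (Polynomial.derivative f.denom)) /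
  algebraMap (Polynomial ℂ) (RatFunc ℂ) f.denom ^ 2

/-- Two `n × n` matrices of rational functions are of the same kind if there is
an invertible matrix `T` over the field of rational functions with
`B = T⁻¹ (A T − T')`. -/
def SameKind {n : ℕ} (A B : Matrix (Fin n) (Fin n) (RatFunc ℂ)) : Prop :=
  ∃ T : Matrix (Fin n) (Fin n) (RatFunc ℂ), IsUnit T.det ∧
    B = T⁻¹ * (A * T - T.map ratDeriv)

/-- A matrix of rational functions is reduced of order `k` if
`B_{j,ℓ} = δ_{j+1,ℓ}` for the rows `1, …, k` (here: indices `0, …, k-1`). -/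
def ReducedOfOrder {n : ℕ} (k : ℕ) (A : Matrix (Fin n) (Fin n) (RatFunc ℂ)) : Prop :=
  ∀ j ℓ : Fin n, (j : ℕ) < k → A j ℓ = if (j : ℕ) + 1 = (ℓ : ℕ) then 1 else 0

/-!
Let `a` be the `k`-th row of `A`. Since `a_{k+1}(∞) ≠ 0`, the identity matrix with its `(k+1)`-st
row replaced by `a` is invertible; let `T` be its inverse, again the identity outside row `k+1`.
Outside that row `T⁻¹` acts trivially and `T' = 0`, so the first `k` rows of
`B = T⁻¹ (A T - T')` are those of `A T`. Row `k` becomes `a T = e_{k+1}` (it is row `k+1` of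
`T⁻¹ T = 1`), while the rows `e_{j+1}`, `j < k`, are fixed by `T`. The entries of `T` and `T⁻¹`
are bounded at infinity and those of `T'` vanish there, so `B(∞) = T(∞)⁻¹ A(∞) T(∞)`.
-/

open Polynomial Bornology Topology

lemma eventually_eval_ne_zero_cobounded {𝕜 : Type*} [NormedField 𝕜] {q : 𝕜[X]} (hq : q ≠ 0) :
    ∀ᶠ z in cobounded 𝕜, q.eval z ≠ 0 :=
  le_cofinite 𝕜 (finite_setOfPred_isRoot hq).compl_mem_cofinite

/-- Substituting `z = 1/t` turns `p(z)/q(z)` into a quotient of the reversed polynomials,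
which is continuous at `t = 0`. -/
lemma tendsto_eval_div_eval_cobounded {𝕜 : Type*} [NormedField 𝕜] {p q : 𝕜[X]} (hq : q ≠ 0)
    (h : p.natDegree ≤ q.natDegree) :
    Tendsto (fun z => p.eval z / q.eval z) (cobounded 𝕜)
      (𝓝 (p.coeff q.natDegree / q.leadingCoeff)) := by
  set d := q.natDegree
  have hreflect : ∀ r : 𝕜[X], r.natDegree ≤ d → ∀ z : 𝕜, z ≠ 0 →
      r.eval z = (r.reflect d).eval z⁻¹ * z ^ d := fun r hr z hz => by
    let := invertibleOfNonzero hz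
    rw [eval, ← eval₂_reflect_mul_pow (RingHom.id 𝕜) z d r hr, invOf_eq_inv, eval]
  have hlim : ∀ r : 𝕜[X],
      Tendsto (fun z : 𝕜 => (r.reflect d).eval z⁻¹) (cobounded 𝕜) (𝓝 (r.coeff d)) := fun r => by
    have h0 : (r.reflect d).eval 0 = r.coeff d := by
      rw [← coeff_zero_eq_eval_zero, coeff_reflect, revAt_zero]
    exact h0 ▸ ((r.reflect d).continuous.tendsto 0).comp tendsto_inv₀_cobounded
  refine ((hlim p).div (hlim q) (leadingCoeff_ne_zero.2 hq)).congr' ?_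
  filter_upwards [eventually_ne_cobounded 0] with z hz
  rw [Pi.div_apply, hreflect p h z hz, hreflect q le_rfl z hz,
    mul_div_mul_right _ _ (pow_ne_zero _ hz)]

lemma evalRat_div_algebraMap_eventuallyEq {x y : ℂ[X]} (hy : y ≠ 0) :
    evalRat (algebraMap ℂ[X] (RatFunc ℂ) x / algebraMap _ _ y) =ᶠ[cobounded ℂ]
      fun z => x.eval z / y.eval z := by
  set g := algebraMap ℂ[X] (RatFunc ℂ) x / algebraMap _ _ y
  filter_upwards [eventually_eval_ne_zero_cobounded hy,
    eventually_eval_ne_zero_cobounded g.denom_ne_zero] with z hyz hgz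
  have h := RatFunc.eval_mul (RingHom.id ℂ) (a := z) (y := algebraMap _ _ y) hgz (by simp)
  rw [div_mul_cancel₀ _ (RatFunc.algebraMap_ne_zero hy)] at h
  simp only [RatFunc.eval_algebraMap, Algebra.algebraMap_self, RingHom.id_apply,
    eval₂_id] at h
  rw [evalRat, eq_div_iff hyz, h]

lemma bddAtInf_iff_intDegree_nonpos (f : RatFunc ℂ) : BddAtInf f ↔ f.intDegree ≤ 0 := by
  rcases eq_or_ne f 0 with rfl | hf
  · simp [BddAtInf]
  · rw [BddAtInf, RatFunc.intDegree, degree_eq_natDegree (RatFunc.num_ne_zero hf),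
      degree_eq_natDegree f.denom_ne_zero, Nat.cast_le, sub_nonpos, Int.ofNat_le]

lemma BddAtInf.add {f g : RatFunc ℂ} (hf : BddAtInf f) (hg : BddAtInf g) :
    BddAtInf (f + g) := by
  rcases eq_or_ne g 0 with rfl | hg0
  · simpa using hf
  rcases eq_or_ne (f + g) 0 with h0 | h0
  · simp [h0, BddAtInf]
  rw [bddAtInf_iff_intDegree_nonpos] at *
  exact (RatFunc.intDegree_add_le hg0 h0).trans (max_le hf hg)

lemma BddAtInf.mul {f g : RatFunc ℂ} (hf : BddAtInf f) (hg : BddAtInf g) :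
    BddAtInf (f * g) := by
  rcases eq_or_ne f 0 with rfl | hf0
  · simpa using hf
  rcases eq_or_ne g 0 with rfl | hg0
  · simpa using hg
  rw [bddAtInf_iff_intDegree_nonpos] at *
  rw [RatFunc.intDegree_mul hf0 hg0]
  exact add_nonpos hf hg

def HasValueAtInf (f : RatFunc ℂ) (c : ℂ) : Prop :=
  BddAtInf f ∧ Tendsto (evalRat f) (cobounded ℂ) (𝓝 c)

lemma HasValueAtInf.unique {f : RatFunc ℂ} {c c' : ℂ} (h : HasValueAtInf f c)
    (h' : HasValueAtInf f c') : c = c' :=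
  tendsto_nhds_unique h.2 h'.2

lemma hasValueAtInf_C (c : ℂ) : HasValueAtInf (RatFunc.C c) c :=
  ⟨by simp [bddAtInf_iff_intDegree_nonpos], tendsto_const_nhds.congr fun z => by simp [evalRat]⟩

lemma hasValueAtInf_zero : HasValueAtInf 0 0 := by simpa using hasValueAtInf_C 0

lemma hasValueAtInf_one : HasValueAtInf 1 1 := by simpa using hasValueAtInf_C 1

lemma hasValueAtInf_div_algebraMap {x y : ℂ[X]} (hy : y ≠ 0) (h : x.degree ≤ y.degree) :
    HasValueAtInf (algebraMap ℂ[X] (RatFunc ℂ) x / algebraMap _ _ y)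
      (x.coeff y.natDegree / y.leadingCoeff) := by
  refine ⟨?_, (tendsto_eval_div_eval_cobounded hy (natDegree_le_natDegree h)).congr'
    (evalRat_div_algebraMap_eventuallyEq hy).symm⟩
  rcases eq_or_ne x 0 with rfl | hx
  · simp [BddAtInf]
  rw [bddAtInf_iff_intDegree_nonpos, RatFunc.intDegree_div (RatFunc.algebraMap_ne_zero hx)
    (RatFunc.algebraMap_ne_zero hy), RatFunc.intDegree_polynomial, RatFunc.intDegree_polynomial,
    sub_nonpos, Nat.cast_le]
  exact natDegree_le_natDegree h

lemma hasValueAtInf_div_algebraMap_of_degree_lt {x y : ℂ[X]} (h : x.degree < y.degree) :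
    HasValueAtInf (algebraMap ℂ[X] (RatFunc ℂ) x / algebraMap _ _ y) 0 := by
  have hy : y ≠ 0 := ne_zero_of_degree_gt h
  simpa [coeff_eq_zero_of_degree_lt (degree_eq_natDegree hy ▸ h)] using
    hasValueAtInf_div_algebraMap hy h.le

lemma BddAtInf.hasValueAtInf {f : RatFunc ℂ} (hf : BddAtInf f) :
    HasValueAtInf f (f.num.coeff f.denom.natDegree / f.denom.leadingCoeff) := by
  simpa only [RatFunc.num_div_denom] using hasValueAtInf_div_algebraMap f.denom_ne_zero hf

namespace HasValueAtInf

variable {f g : RatFunc ℂ} {a b : ℂ}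

lemma ne_zero (hf : HasValueAtInf f a) (ha : a ≠ 0) : f ≠ 0 := by
  rintro rfl
  exact ha (hf.unique hasValueAtInf_zero)

lemma add (hf : HasValueAtInf f a) (hg : HasValueAtInf g b) : HasValueAtInf (f + g) (a + b) := by
  refine ⟨hf.1.add hg.1, (hf.2.add hg.2).congr' ?_⟩
  filter_upwards [eventually_eval_ne_zero_cobounded f.denom_ne_zero,
    eventually_eval_ne_zero_cobounded g.denom_ne_zero] with z hfz hgz
  exact (RatFunc.eval_add (RingHom.id ℂ) z hfz hgz).symm

lemma mul (hf : HasValueAtInf f a) (hg : HasValueAtInf g b) : HasValueAtInf (f * g) (a * b) := by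
  refine ⟨hf.1.mul hg.1, (hf.2.mul hg.2).congr' ?_⟩
  filter_upwards [eventually_eval_ne_zero_cobounded f.denom_ne_zero,
    eventually_eval_ne_zero_cobounded g.denom_ne_zero] with z hfz hgz
  exact (RatFunc.eval_mul (RingHom.id ℂ) z hfz hgz).symm

lemma neg (hf : HasValueAtInf f a) : HasValueAtInf (-f) (-a) := by
  simpa using (hasValueAtInf_C (-1)).mul hf

lemma sub (hf : HasValueAtInf f a) (hg : HasValueAtInf g b) : HasValueAtInf (f - g) (a - b) := by
  simpa [sub_eq_add_neg] using hf.add hg.neg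

lemma sum {ι : Type*} {s : Finset ι} {f : ι → RatFunc ℂ} {c : ι → ℂ}
    (h : ∀ i ∈ s, HasValueAtInf (f i) (c i)) :
    HasValueAtInf (∑ i ∈ s, f i) (∑ i ∈ s, c i) := by
  classical
  induction s using Finset.induction_on with
  | empty => simpa using hasValueAtInf_zero
  | insert i s hi ih =>
    rw [Finset.sum_insert hi, Finset.sum_insert hi]
    exact (h i (s.mem_insert_self i)).add (ih fun j hj => h j (Finset.mem_insert_of_mem hj))

lemma intDegree_nonneg (hf : HasValueAtInf f a) (ha : a ≠ 0) : 0 ≤ f.intDegree := by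
  by_contra! hneg
  have hdeg : f.num.natDegree < f.denom.natDegree := by rw [RatFunc.intDegree] at hneg; omega
  refine ha (hf.unique ?_)
  simpa [coeff_eq_zero_of_natDegree_lt hdeg] using hf.1.hasValueAtInf

lemma inv (hf : HasValueAtInf f a) (ha : a ≠ 0) : HasValueAtInf f⁻¹ a⁻¹ := by
  refine ⟨?_, (hf.2.inv₀ ha).congr' ?_⟩
  · rw [bddAtInf_iff_intDegree_nonpos, RatFunc.intDegree_inv, neg_nonpos]
    exact hf.intDegree_nonneg ha
  filter_upwards [eventually_eval_ne_zero_cobounded f.denom_ne_zero,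
    eventually_eval_ne_zero_cobounded f⁻¹.denom_ne_zero] with z hfz hgz
  have h := RatFunc.eval_mul (RingHom.id ℂ) z hfz hgz
  rw [mul_inv_cancel₀ (hf.ne_zero ha), RatFunc.eval_one] at h
  exact inv_eq_of_mul_eq_one_right h.symm

lemma div (hf : HasValueAtInf f a) (hg : HasValueAtInf g b) (hb : b ≠ 0) :
    HasValueAtInf (f / g) (a / b) := by
  simpa [div_eq_mul_inv] using hf.mul (hg.inv hb)

end HasValueAtInf

lemma degree_derivative_lt_of_degree_le {R : Type*} [Semiring R] {p q : R[X]} (hq : q ≠ 0)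
    (h : p.degree ≤ q.degree) :
    (derivative p).degree < q.degree := by
  rcases eq_or_ne p 0 with rfl | hp
  · simpa [bot_lt_iff_ne_bot] using hq
  · exact (degree_derivative_lt hp).trans_le h

/-- With `f = P/Q`, the derivative is `P'/Q - (P/Q)(Q'/Q)`, and both `P'/Q` and `Q'/Q` vanish
at infinity for degree reasons. -/
lemma BddAtInf.hasValueAtInf_ratDeriv {f : RatFunc ℂ} (hf : BddAtInf f) :
    HasValueAtInf (ratDeriv f) 0 := by
  have hq : f.denom ≠ 0 := f.denom_ne_zero
  have hsplit : ratDeriv f = algebraMap _ _ (derivative f.num) / algebraMap _ _ f.denom -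
      algebraMap _ _ f.num / algebraMap _ _ f.denom *
        (algebraMap _ _ (derivative f.denom) / algebraMap _ _ f.denom) := by
    rw [ratDeriv]
    field_simp
  rw [hsplit]
  simpa using (hasValueAtInf_div_algebraMap_of_degree_lt
    (degree_derivative_lt_of_degree_le hq hf)).sub
    ((hasValueAtInf_div_algebraMap hq hf).mul
      (hasValueAtInf_div_algebraMap_of_degree_lt (degree_derivative_lt_of_degree_le hq le_rfl)))

namespace Matrix

variable {l m n : Type*}

def HasValueAtInf (X : Matrix m n (RatFunc ℂ)) (Y : Matrix m n ℂ) : Prop :=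
  ∀ i j, _root_.HasValueAtInf (X i j) (Y i j)

namespace HasValueAtInf

variable {X Z : Matrix m n (RatFunc ℂ)} {Y W : Matrix m n ℂ}

lemma unique (h : X.HasValueAtInf Y) (h' : X.HasValueAtInf W) : Y = W :=
  ext fun i j => (h i j).unique (h' i j)

lemma sub (hX : X.HasValueAtInf Y) (hZ : Z.HasValueAtInf W) : (X - Z).HasValueAtInf (Y - W) :=
  fun i j => (hX i j).sub (hZ i j)

lemma mul [Fintype m] {X : Matrix l m (RatFunc ℂ)} {Z : Matrix m n (RatFunc ℂ)}
    {Y : Matrix l m ℂ} {W : Matrix m n ℂ} (hX : X.HasValueAtInf Y) (hZ : Z.HasValueAtInf W) :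
    (X * Z).HasValueAtInf (Y * W) :=
  fun i j => _root_.HasValueAtInf.sum fun k _ => (hX i k).mul (hZ k j)

end HasValueAtInf

lemma hasValueAtInf_one [DecidableEq n] : (1 : Matrix n n (RatFunc ℂ)).HasValueAtInf 1 := by
  intro i j
  rcases eq_or_ne i j with rfl | hij
  · simpa using _root_.hasValueAtInf_one
  · simpa [one_apply_ne hij] using hasValueAtInf_zero

lemma hasValueAtInf_map_ratDeriv {X : Matrix m n (RatFunc ℂ)} (hX : ∀ i j, BddAtInf (X i j)) :
    (X.map ratDeriv).HasValueAtInf 0 :=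
  fun i j => (hX i j).hasValueAtInf_ratDeriv

lemma hasValueAtInf_updateRow_one [DecidableEq n] (κ : n) {u : n → RatFunc ℂ} {v : n → ℂ}
    (h : ∀ j, _root_.HasValueAtInf (u j) (v j)) :
    (updateRow 1 κ u).HasValueAtInf (updateRow 1 κ v) := by
  intro i j
  rcases eq_or_ne i κ with rfl | hi
  · simpa using h j
  · simpa [updateRow_ne hi] using hasValueAtInf_one i j

end Matrix

/-- The gauge transformation `A ↦ T⁻¹ (A T - T')` of the system `Y' = A Y` under `Y = T Z`. -/
noncomputable def gaugeTransform {n : Type*} [Fintype n] [DecidableEq n]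
    (T A : Matrix n n (RatFunc ℂ)) : Matrix n n (RatFunc ℂ) :=
  T⁻¹ * (A * T - T.map ratDeriv)

/-- The derivative term `T'` vanishes at infinity, so only the conjugation survives. -/
lemma Matrix.HasValueAtInf.gaugeTransform {n : Type*} [Fintype n] [DecidableEq n]
    {A T : Matrix n n (RatFunc ℂ)} {A₀ S S' : Matrix n n ℂ} (hA : A.HasValueAtInf A₀)
    (hT : T.HasValueAtInf S) (hTinv : T⁻¹.HasValueAtInf S') (hdet : IsUnit T.det) :
    IsUnit S.det ∧ (gaugeTransform T A).HasValueAtInf (S⁻¹ * A₀ * S) := by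
  have hS : S' * S = 1 :=
    (hTinv.mul hT).unique <| by
      simpa [nonsing_inv_mul _ hdet] using Matrix.hasValueAtInf_one (n := n)
  refine ⟨isUnit_det_of_left_inverse hS, ?_⟩
  rw [inv_eq_left_inv hS, Matrix.mul_assoc, _root_.gaugeTransform]
  simpa using hTinv.mul ((hA.mul hT).sub (hasValueAtInf_map_ratDeriv fun i j => (hT i j).1))

section RowOperation

open Matrix

variable {F n : Type*} [Field F] [DecidableEq n]

/-- The row `κ` of `(updateRow 1 κ w)⁻¹`. -/
def invRow (κ : n) (w : n → F) : n → F :=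
  fun j => if j = κ then (w κ)⁻¹ else -w j / w κ

lemma mul_updateRow_one_apply [Fintype n] (M : Matrix n n F) (κ : n) (u : n → F) (i j : n) :
    (M * updateRow 1 κ u) i j = M i κ * u j + if j = κ then 0 else M i j := by
  rw [mul_apply, ← Finset.add_sum_erase _ _ (Finset.mem_univ κ), updateRow_self]
  congr 1
  rw [Finset.sum_congr rfl fun m hm => by rw [updateRow_ne (Finset.ne_of_mem_erase hm)]]
  split_ifs with hj
  · subst hj
    exact Finset.sum_eq_zero fun m hm => by simp [one_apply_ne (Finset.ne_of_mem_erase hm)]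
  · simp [one_apply, Finset.mem_erase, hj]

lemma updateRow_mul_apply_of_ne [Fintype n] (M X : Matrix n n F) {κ i : n} (u : n → F)
    (hi : i ≠ κ) (j : n) :
    (updateRow M κ u * X) i j = (M * X) i j := by
  simp only [mul_apply, updateRow_ne hi]

lemma mul_invRow_add_eq_ite {w : n → F} {κ : n} (hw : w κ ≠ 0) (j : n) :
    w κ * invRow κ w j + (if j = κ then 0 else w j) = if j = κ then 1 else 0 := by
  unfold invRow
  split_ifs with hj
  · simp [hw]
  · field_simp
    ring

lemma updateRow_one_mul_updateRow_one_invRow [Fintype n] {w : n → F} {κ : n} (hw : w κ ≠ 0) :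
    updateRow 1 κ w * updateRow 1 κ (invRow κ w) = 1 := by
  ext i j
  rw [mul_updateRow_one_apply]
  rcases eq_or_ne i κ with rfl | hi
  · simpa [eq_comm, one_apply] using mul_invRow_add_eq_ite hw j
  · simp only [updateRow_ne hi, one_apply_ne hi, zero_mul, zero_add]
    split_ifs with hj
    · exact (one_apply_ne (hj ▸ hi)).symm
    · rfl

end RowOperation

lemma hasValueAtInf_invRow {n : Type*} [DecidableEq n] {κ : n} {u : n → RatFunc ℂ} {v : n → ℂ}
    (h : ∀ j, HasValueAtInf (u j) (v j)) (hv : v κ ≠ 0) (j : n) :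
    HasValueAtInf (invRow κ u j) (invRow κ v j) := by
  unfold invRow
  split_ifs
  · exact (h κ).inv hv
  · exact (h j).neg.div (h κ) hv

open Matrix in
lemma reducedOfOrder_gaugeTransform {n : ℕ} {A : Matrix (Fin n) (Fin n) (RatFunc ℂ)}
    {κ' κ : Fin n} (hκ : (κ : ℕ) = κ' + 1) (hred : ReducedOfOrder κ' A) (ha : A κ' κ ≠ 0) :
    ReducedOfOrder κ (gaugeTransform (updateRow 1 κ (invRow κ (A κ'))) A) := by
  intro j ℓ hj
  have hjκ : j ≠ κ := fun h => (h ▸ hj).false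
  have hT' : (updateRow 1 κ (invRow κ (A κ'))).map ratDeriv j ℓ = 0 := by
    rw [map_apply, updateRow_ne hjκ, one_apply]
    split_ifs <;> simp [ratDeriv]
  rw [gaugeTransform, inv_eq_left_inv (updateRow_one_mul_updateRow_one_invRow ha),
    updateRow_mul_apply_of_ne _ _ _ hjκ, Matrix.one_mul, Matrix.sub_apply, hT', sub_zero,
    mul_updateRow_one_apply]
  rcases Nat.lt_succ_iff_lt_or_eq.1 (hκ ▸ hj) with hlt | heq
  · rw [hred j κ hlt, if_neg (by omega), zero_mul, zero_add]
    by_cases hℓκ : ℓ = κ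
    · rw [if_pos hℓκ, if_neg (by rw [hℓκ]; omega)]
    · rw [if_neg hℓκ, hred j ℓ hlt]
  · obtain rfl : j = κ' := Fin.ext heq
    rw [mul_invRow_add_eq_ite ha]
    exact if_congr (by rw [Fin.ext_iff]; omega) rfl rfl

/-- Lemma 2.4: if `A` is reduced of order `k-1`, bounded at infinity, and
`A_{k,k+1}(∞) ≠ 0` (rows and columns numbered `1, …, n`), then there is a
matrix `B` of the same kind as `A`, bounded at infinity, reduced of order `k`,
and a constant invertible matrix `S` with `B(∞) = S⁻¹ A(∞) S`; in particular
`A(∞)` and `B(∞)` are similar. -/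
theorem lemma_same_kind_reduction (n k : ℕ) (hk1 : 1 ≤ k) (hkn : k ≤ n - 1)
    (A : Matrix (Fin n) (Fin n) (RatFunc ℂ))
    (hbdd : ∀ i j, BddAtInf (A i j))
    (Ainf : Matrix (Fin n) (Fin n) ℂ)
    (hAinf : ∀ i j, Tendsto (evalRat (A i j)) (Bornology.cobounded ℂ) (nhds (Ainf i j)))
    (hred : ReducedOfOrder (k - 1) A)
    (hnz : Ainf ⟨k - 1, by omega⟩ ⟨k, by omega⟩ ≠ 0) :
    ∃ (B : Matrix (Fin n) (Fin n) (RatFunc ℂ)) (Binf : Matrix (Fin n) (Fin n) ℂ),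
      (∀ i j, BddAtInf (B i j)) ∧
      (∀ i j, Tendsto (evalRat (B i j)) (Bornology.cobounded ℂ) (nhds (Binf i j))) ∧
      SameKind A B ∧
      ReducedOfOrder k B ∧
      ∃ S : Matrix (Fin n) (Fin n) ℂ, IsUnit S.det ∧ Binf = S⁻¹ * Ainf * S := by
  set κ' : Fin n := ⟨k - 1, by omega⟩
  set κ : Fin n := ⟨k, by omega⟩
  have hA : A.HasValueAtInf Ainf := fun i j => ⟨hbdd i j, hAinf i j⟩
  have ha : A κ' κ ≠ 0 := (hA κ' κ).ne_zero hnz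
  set T := Matrix.updateRow 1 κ (invRow κ (A κ'))
  have hTinv : T⁻¹ = Matrix.updateRow 1 κ (A κ') :=
    Matrix.inv_eq_left_inv (updateRow_one_mul_updateRow_one_invRow ha)
  have hdet : IsUnit T.det := Matrix.isUnit_det_of_left_inverse
    (updateRow_one_mul_updateRow_one_invRow ha)
  obtain ⟨hS, hB⟩ := hA.gaugeTransform
    (Matrix.hasValueAtInf_updateRow_one κ (hasValueAtInf_invRow (hA κ') hnz))
    (hTinv ▸ Matrix.hasValueAtInf_updateRow_one κ (hA κ')) hdet
  exact ⟨gaugeTransform T A, _, fun i j => (hB i j).1, fun i j => (hB i j).2, ⟨T, hdet, rfl⟩,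
    reducedOfOrder_gaugeTransform (by simp [κ, κ']; omega) hred ha, _, hS, rfl⟩
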